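/- Let d ≥ 1 and let φ: ℝ^d → ℝ be a bounded, compactly supported function that is continuous except on a finite union of hyperplanes (i.e. φ ∈ 𝒞). Then for every fixed j ∈ ℤ^d, lim_{n→∞} n^{−d} Σ_{k∈ℤ^d} φ(k/n) φ((j+k)/n) = ∫_{ℝ^d} |φ(x)|² dx; moreover the convergence is bounded: sup_{n∈ℕ, j∈ℤ^d} | n^{−d} Σ_{k∈ℤ^d} φ(k/n) φ((j+k)/n) | < ∞. -/

import Mathlib

/-!
The normalized sum `n^{-d} ∑_k F k` is the integral of the step function `x ↦ F ⌈n x⌉`, whose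
level sets are cubes of volume `n^{-d}`. For `F k = φ (k/n) φ ((j+k)/n)` these step functions
converge to `φ²` at every continuity point of `φ`, hence almost everywhere because hyperplanes are
Lebesgue-null, and they are dominated by `C²` times the indicator of a ball around the support of
`φ`. Dominated convergence gives the limit, and the same domination gives the uniform bound.
-/

open MeasureTheory Filter Complex Topology

noncomputable section

/-- `S ζ n φ ω = n^{-d/2} ∑_{k ∈ ℤ^d} ζ_k(ω) φ(k/n)`. -/
def S {d : ℕ} {Ω : Type*} (ζ : (Fin d → ℤ) → Ω → ℝ) (n : ℕ)
    (φ : (Fin d → ℝ) → ℝ) (ω : Ω) : ℝ :=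
  (n : ℝ) ^ (-(d : ℝ) / 2) * ∑' k : Fin d → ℤ, ζ k ω * φ (fun i => (k i : ℝ) / n)

/-- Stationarity of the random field: every lattice shift leaves the law invariant. -/
def Stationary {d : ℕ} {Ω : Type*} [MeasurableSpace Ω] (P : Measure Ω)
    (ζ : (Fin d → ℤ) → Ω → ℝ) : Prop :=
  ∀ j : Fin d → ℤ,
    Measure.map (fun ω => fun k => ζ (k + j) ω) P
      = Measure.map (fun ω => fun k => ζ k ω) P

/-- Covariance of two real random variables. -/
def cov {Ω : Type*} [MeasurableSpace Ω] (P : Measure Ω) (X Y : Ω → ℝ) : ℝ :=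
  ∫ ω, (X ω - ∫ x, X x ∂P) * (Y ω - ∫ x, Y x ∂P) ∂P

/-- Upright boxes `(a₁,b₁] × ⋯ × (a_d,b_d]`. -/
def IsBox {d : ℕ} (Q : Set (Fin d → ℝ)) : Prop :=
  ∃ a b : Fin d → ℝ, (∀ i, a i < b i) ∧ Q = {x | ∀ i, a i < x i ∧ x i ≤ b i}

/-- The class 𝒰 of finite linear combinations of indicators of upright boxes. -/
def memU {d : ℕ} (φ : (Fin d → ℝ) → ℝ) : Prop :=
  ∃ (m : ℕ) (c : Fin m → ℝ) (Q : Fin m → Set (Fin d → ℝ)),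
    (∀ l, IsBox (Q l)) ∧ φ = fun x => ∑ l, c l * (Q l).indicator (fun _ => (1 : ℝ)) x

/-- The class 𝒞 of bounded compactly supported functions continuous off a finite
union of hyperplanes. -/
def memC {d : ℕ} (φ : (Fin d → ℝ) → ℝ) : Prop :=
  HasCompactSupport φ ∧ (∃ C : ℝ, ∀ x, |φ x| ≤ C) ∧
    ∃ (m : ℕ) (c : Fin m → Fin d → ℝ) (t : Fin m → ℝ),
      (∀ l, c l ≠ 0) ∧
      ContinuousOn φ (⋃ l, {x : Fin d → ℝ | ∑ i, c l i * x i = t l})ᶜ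

/-- Separation of two subsets of ℝ^d in the sup metric
(`dist` on `Fin d → ℝ` is `max_i |x i - y i|`). -/
def sep {d : ℕ} (A B : Set (Fin d → ℝ)) : ℝ :=
  sInf (Set.image2 dist A B)

/-- Condition (AI): asymptotic independence of `S_n(φ₁), S_n(φ₂)` for separated
supports. -/
def AI {d : ℕ} {Ω : Type*} [MeasurableSpace Ω] (P : Measure Ω)
    (ζ : (Fin d → ℤ) → Ω → ℝ) : Prop :=
  ∀ δ : ℝ, 0 < δ → ∀ φ₁ φ₂ : (Fin d → ℝ) → ℝ, memU φ₁ → memU φ₂ →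
    δ ≤ sep (Function.support φ₁) (Function.support φ₂) →
    ∀ a b : ℝ,
      Tendsto (fun n : ℕ =>
          (∫ ω, Complex.exp (Complex.I * ((a * S ζ n φ₁ ω + b * S ζ n φ₂ ω : ℝ) : ℂ)) ∂P)
            - (∫ ω, Complex.exp (Complex.I * ((a * S ζ n φ₁ ω : ℝ) : ℂ)) ∂P)
              * (∫ ω, Complex.exp (Complex.I * ((b * S ζ n φ₂ ω : ℝ) : ℂ)) ∂P))
        atTop (𝓝 0)

theorem addHaar_preimage_singleton_eq_zero {E : Type*} [NormedAddCommGroup E] [NormedSpace ℝ E]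
    [MeasurableSpace E] [BorelSpace E] [FiniteDimensional ℝ E] (μ : Measure E) [μ.IsAddHaarMeasure]
    {L : E →ₗ[ℝ] ℝ} (hL : L ≠ 0) (t : ℝ) : μ (L ⁻¹' {t}) = 0 := by
  obtain ⟨x₀, rfl⟩ := LinearMap.surjective_of_ne_zero hL t
  have hfiber : L ⁻¹' {L x₀} = (· + -x₀) ⁻¹' (LinearMap.ker L : Set E) := by
    ext x
    simp [sub_eq_zero, ← sub_eq_add_neg]
  rw [hfiber, measure_preimage_add_right]
  exact Measure.addHaar_submodule μ _ (mt LinearMap.ker_eq_top.mp hL)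

theorem volume_hyperplane_eq_zero {ι : Type*} [Fintype ι] {c : ι → ℝ} (hc : c ≠ 0) (t : ℝ) :
    volume {x : ι → ℝ | ∑ i, c i * x i = t} = 0 := by
  have hL : dotProductBilin ℝ ℝ c ≠ 0 := fun h =>
    hc (dotProduct_self_eq_zero.mp (LinearMap.congr_fun h c))
  exact addHaar_preimage_singleton_eq_zero volume hL t

theorem ae_continuousAt_of_memC {d : ℕ} {φ : (Fin d → ℝ) → ℝ} (hφ : memC φ) :
    ∀ᵐ x, ContinuousAt φ x := by
  obtain ⟨-, -, m, c, t, hc, hcont⟩ := hφ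
  set H := ⋃ l, {x : Fin d → ℝ | ∑ i, c l i * x i = t l}
  have hH_null : volume H = 0 :=
    measure_iUnion_null fun l => volume_hyperplane_eq_zero (hc l) (t l)
  have hH_closed : IsClosed H := isClosed_iUnion_of_finite fun l =>
    isClosed_eq (continuous_finsetSum _ fun i _ => continuous_const.mul (continuous_apply i))
      continuous_const
  filter_upwards [measure_eq_zero_iff_ae_notMem.mp hH_null] with x hx
  exact hcont.continuousAt (hH_closed.isOpen_compl.mem_nhds hx)

section RiemannSum

variable {ι : Type*}

theorem ceil_preimage_singleton (k : ι → ℤ) :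
    (fun y : ι → ℝ => fun i => ⌈y i⌉) ⁻¹' {k} =
      Set.univ.pi fun i => Set.Ioc ((k i : ℝ) - 1) (k i) := by
  ext y
  simp only [Set.mem_preimage, Set.mem_singleton_iff, funext_iff, Set.mem_univ_pi, Set.mem_Ioc,
    Int.ceil_eq_iff]

variable [Fintype ι]

theorem integral_comp_ceil (F : (ι → ℤ) → ℝ)
    (hF : Integrable fun y : ι → ℝ => F fun i => ⌈y i⌉) :
    ∫ y : ι → ℝ, F (fun i => ⌈y i⌉) = ∑' k, F k := by
  set q : (ι → ℝ) → ι → ℤ := fun y i => ⌈y i⌉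
  have hcell : ∀ k, MeasurableSet (q ⁻¹' {k}) := fun k => by
    rw [ceil_preimage_singleton]
    exact MeasurableSet.univ_pi fun _ => measurableSet_Ioc
  have hvol : ∀ k, volume.real (q ⁻¹' {k}) = 1 := fun k => by
    simp [q, ceil_preimage_singleton, measureReal_def, volume_pi_pi]
  have hcover : (⋃ k, q ⁻¹' {k}) = Set.univ := by
    ext y
    simp
  calc ∫ y, F (q y) = ∑' k, ∫ y in q ⁻¹' {k}, F (q y) := by
        rw [← setIntegral_univ, ← hcover,
          integral_iUnion hcell (pairwise_disjoint_fiber q) (hcover ▸ hF.integrableOn)]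
    _ = ∑' k, F k := by
        congr 1 with k
        rw [setIntegral_congr_fun (hcell k) fun y (hy : q y = k) => congrArg F hy,
          setIntegral_const, hvol, one_smul]

theorem integral_comp_ceil_mul {r : ℝ} (hr : 0 < r) (F : (ι → ℤ) → ℝ)
    (hF : Integrable fun y : ι → ℝ => F fun i => ⌈r * y i⌉) :
    ∫ y : ι → ℝ, F (fun i => ⌈r * y i⌉) = r ^ (-(Fintype.card ι : ℝ)) * ∑' k, F k := by
  have hscale := Measure.integral_comp_smul volume (fun y : ι → ℝ => F fun i => ⌈y i⌉) r
  rw [integral_comp_ceil F ((integrable_comp_smul_iff volume _ hr.ne').mp hF)] at hscale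
  rw [Real.rpow_neg hr.le, Real.rpow_natCast]
  simpa [Module.finrank_fintype_fun_eq_card, abs_of_pos hr] using hscale

end RiemannSum

theorem tendsto_intCast_add_ceil_mul_div (a : ℤ) (x : ℝ) :
    Tendsto (fun n : ℕ => ((a + ⌈n * x⌉ : ℤ) : ℝ) / n) atTop (𝓝 x) := by
  have hlim : ∀ b : ℝ, Tendsto (fun n : ℕ => x + b / n) atTop (𝓝 x) := fun b => by
    simpa using tendsto_const_nhds.add (tendsto_const_div_atTop_nhds_zero_nat b)
  have hceil := fun n : ℕ => Int.le_ceil ((n : ℝ) * x)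
  have hceil' := fun n : ℕ => Int.ceil_lt_add_one ((n : ℝ) * x)
  refine tendsto_of_tendsto_of_tendsto_of_le_of_le' (hlim a) (hlim (a + 1)) ?_ ?_ <;>
    filter_upwards [eventually_gt_atTop 0] with n hn <;>
    rw [add_div' _ _ _ (by positivity)] <;> gcongr <;> push_cast <;> linarith [hceil n, hceil' n]

section LatticeProduct

variable {ι : Type*}

def latticeProduct (φ ψ : (ι → ℝ) → ℝ) (j : ι → ℤ) (n : ℕ) (k : ι → ℤ) : ℝ :=
  φ (fun i => (k i : ℝ) / n) * ψ (fun i => ((j i + k i : ℤ) : ℝ) / n)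

variable {φ ψ : (ι → ℝ) → ℝ}

theorem tendsto_latticeProduct_ceil {x : ι → ℝ} (hφx : ContinuousAt φ x)
    (hψx : ContinuousAt ψ x) (j : ι → ℤ) :
    Tendsto (fun n : ℕ => latticeProduct φ ψ j n (fun i => ⌈n * x i⌉)) atTop
      (𝓝 (φ x * ψ x)) := by
  have hround (a : ι → ℤ) :
      Tendsto (fun n : ℕ => fun i => ((a i + ⌈n * x i⌉ : ℤ) : ℝ) / n) atTop (𝓝 x) :=
    tendsto_pi_nhds.2 fun i => tendsto_intCast_add_ceil_mul_div (a i) (x i)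
  exact (hφx.tendsto.comp (by simpa using hround 0)).mul (hψx.tendsto.comp (hround j))

variable [Fintype ι] {C R : ℝ}

theorem dist_ceil_mul_div_le {n : ℕ} (hn : n ≠ 0) (x : ι → ℝ) :
    dist (fun i => (⌈n * x i⌉ : ℝ) / n) x ≤ 1 / n := by
  have hn' : (0 : ℝ) < n := by positivity
  refine (dist_pi_le_iff (by positivity)).mpr fun i => ?_
  have hdiff : (⌈n * x i⌉ : ℝ) / n - x i = (⌈n * x i⌉ - n * x i) / n := by field_simp
  rw [Real.dist_eq, hdiff, abs_div, abs_of_pos hn', abs_of_nonneg (sub_nonneg.2 (Int.le_ceil _))]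
  gcongr
  linarith [Int.ceil_lt_add_one ((n : ℝ) * x i)]

theorem integrable_indicator_closedBall_const (R C : ℝ) :
    Integrable ((Metric.closedBall (0 : ι → ℝ) R).indicator fun _ => C) :=
  (integrableOn_const measure_closedBall_lt_top.ne).integrable_indicator measurableSet_closedBall

theorem norm_latticeProduct_ceil_le (hφC : ∀ x, |φ x| ≤ C) (hψC : ∀ x, |ψ x| ≤ C)
    (hR : tsupport φ ⊆ Metric.closedBall 0 R) (j : ι → ℤ) {n : ℕ} (hn : 1 ≤ n) (x : ι → ℝ) :
    ‖latticeProduct φ ψ j n (fun i => ⌈n * x i⌉)‖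
      ≤ (Metric.closedBall 0 (R + 1)).indicator (fun _ => C ^ 2) x := by
  by_cases hx : x ∈ Metric.closedBall 0 (R + 1)
  · rw [Set.indicator_of_mem hx, latticeProduct, Real.norm_eq_abs, abs_mul, sq]
    exact mul_le_mul (hφC _) (hψC _) (abs_nonneg _) ((abs_nonneg _).trans (hφC 0))
  · have hround : dist (fun i => (⌈n * x i⌉ : ℝ) / n) x ≤ 1 :=
      (dist_ceil_mul_div_le (by omega) x).trans
        (div_le_one_of_le₀ (by exact_mod_cast hn) (by positivity))
    have hvanish : φ (fun i => (⌈n * x i⌉ : ℝ) / n) = 0 := by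
      refine image_eq_zero_of_notMem_tsupport fun hmem => hx ?_
      have hball := Metric.mem_closedBall.mp (hR hmem)
      rw [Metric.mem_closedBall]
      linarith [dist_triangle_left x 0 (fun i => (⌈n * x i⌉ : ℝ) / n)]
    simp [Set.indicator_of_notMem hx, latticeProduct, hvanish]

theorem integrable_latticeProduct_ceil (hφC : ∀ x, |φ x| ≤ C) (hψC : ∀ x, |ψ x| ≤ C)
    (hR : tsupport φ ⊆ Metric.closedBall 0 R) (j : ι → ℤ) {n : ℕ} (hn : 1 ≤ n) :
    Integrable fun x : ι → ℝ => latticeProduct φ ψ j n (fun i => ⌈n * x i⌉) := by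
  have hmeas : Measurable fun x : ι → ℝ => latticeProduct φ ψ j n (fun i => ⌈n * x i⌉) :=
    (measurable_of_countable (latticeProduct φ ψ j n)).comp <|
      measurable_pi_lambda _ fun i => (measurable_const.mul (measurable_pi_apply i)).ceil
  exact .mono' (integrable_indicator_closedBall_const _ _) hmeas.aestronglyMeasurable
    (ae_of_all _ (norm_latticeProduct_ceil_le hφC hψC hR j hn))

theorem rpow_mul_tsum_latticeProduct_eq_integral (hφC : ∀ x, |φ x| ≤ C) (hψC : ∀ x, |ψ x| ≤ C)
    (hR : tsupport φ ⊆ Metric.closedBall 0 R) (j : ι → ℤ) {n : ℕ} (hn : 1 ≤ n) :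
    (n : ℝ) ^ (-(Fintype.card ι : ℝ)) * ∑' k, latticeProduct φ ψ j n k
      = ∫ x : ι → ℝ, latticeProduct φ ψ j n (fun i => ⌈n * x i⌉) :=
  (integral_comp_ceil_mul (by positivity) _ (integrable_latticeProduct_ceil hφC hψC hR j hn)).symm

theorem tendsto_rpow_mul_tsum_latticeProduct (hφ : HasCompactSupport φ)
    (hφC : ∀ x, |φ x| ≤ C) (hψC : ∀ x, |ψ x| ≤ C) (hφc : ∀ᵐ x, ContinuousAt φ x)
    (hψc : ∀ᵐ x, ContinuousAt ψ x) (j : ι → ℤ) :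
    Tendsto (fun n : ℕ => (n : ℝ) ^ (-(Fintype.card ι : ℝ)) * ∑' k, latticeProduct φ ψ j n k)
      atTop (𝓝 (∫ x, φ x * ψ x)) := by
  obtain ⟨R, hR⟩ := hφ.isBounded.subset_closedBall 0
  have hdct : Tendsto (fun n : ℕ => ∫ x : ι → ℝ, latticeProduct φ ψ j n (fun i => ⌈n * x i⌉))
      atTop (𝓝 (∫ x, φ x * ψ x)) :=
    tendsto_integral_filter_of_dominated_convergence _
      ((eventually_ge_atTop 1).mono fun n hn =>
        (integrable_latticeProduct_ceil hφC hψC hR j hn).aestronglyMeasurable)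
      ((eventually_ge_atTop 1).mono fun n hn =>
        ae_of_all _ (norm_latticeProduct_ceil_le hφC hψC hR j hn))
      (integrable_indicator_closedBall_const _ _)
      (by filter_upwards [hφc, hψc] with x hφx hψx using tendsto_latticeProduct_ceil hφx hψx j)
  exact hdct.congr' <| (eventually_ge_atTop 1).mono fun n hn =>
    (rpow_mul_tsum_latticeProduct_eq_integral hφC hψC hR j hn).symm

theorem exists_abs_rpow_mul_tsum_latticeProduct_le (hφ : HasCompactSupport φ)
    (hφC : ∀ x, |φ x| ≤ C) (hψC : ∀ x, |ψ x| ≤ C) :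
    ∃ B : ℝ, ∀ n : ℕ, 1 ≤ n → ∀ j : ι → ℤ,
      |(n : ℝ) ^ (-(Fintype.card ι : ℝ)) * ∑' k, latticeProduct φ ψ j n k| ≤ B := by
  obtain ⟨R, hR⟩ := hφ.isBounded.subset_closedBall 0
  refine ⟨∫ x : ι → ℝ, (Metric.closedBall 0 (R + 1)).indicator (fun _ => C ^ 2) x,
    fun n hn j => ?_⟩
  rw [rpow_mul_tsum_latticeProduct_eq_integral hφC hψC hR j hn, ← Real.norm_eq_abs]
  exact norm_integral_le_of_norm_le (integrable_indicator_closedBall_const _ _)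
    (ae_of_all _ (norm_latticeProduct_ceil_le hφC hψC hR j hn))

end LatticeProduct

theorem stmt9_general {d : ℕ} (φ : (Fin d → ℝ) → ℝ) (hφ : memC φ) :
    (∀ j : Fin d → ℤ,
      Tendsto (fun n : ℕ =>
          (n : ℝ) ^ (-(d : ℝ)) * ∑' k : Fin d → ℤ,
            φ (fun i => (k i : ℝ) / n) * φ (fun i => ((j i + k i : ℤ) : ℝ) / n))
        atTop (𝓝 (∫ x : Fin d → ℝ, (φ x) ^ 2))) ∧
    ∃ C : ℝ, ∀ n : ℕ, 1 ≤ n → ∀ j : Fin d → ℤ,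
      |(n : ℝ) ^ (-(d : ℝ)) * ∑' k : Fin d → ℤ,
          φ (fun i => (k i : ℝ) / n) * φ (fun i => ((j i + k i : ℤ) : ℝ) / n)| ≤ C := by
  have hcont := ae_continuousAt_of_memC hφ
  obtain ⟨hcs, ⟨C, hC⟩, -⟩ := hφ
  refine ⟨fun j => ?_, ?_⟩
  · simpa only [Fintype.card_fin, latticeProduct, sq] using
      tendsto_rpow_mul_tsum_latticeProduct hcs hC hC hcont hcont j
  · simpa only [Fintype.card_fin, latticeProduct] using
      exists_abs_rpow_mul_tsum_latticeProduct_le (ψ := φ) hcs hC hC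

/-- For `φ ∈ 𝒞` and each fixed `j ∈ ℤ^d`,
`n^{-d} ∑_k φ(k/n) φ((j+k)/n) → ∫_{ℝ^d} |φ(x)|² dx` as `n → ∞`, and the
quantities are bounded uniformly in `n ≥ 1` and `j`. -/
theorem stmt9 {d : ℕ} [NeZero d] (φ : (Fin d → ℝ) → ℝ) (hφ : memC φ) :
    (∀ j : Fin d → ℤ,
      Tendsto (fun n : ℕ =>
          (n : ℝ) ^ (-(d : ℝ)) * ∑' k : Fin d → ℤ,
            φ (fun i => (k i : ℝ) / n) * φ (fun i => ((j i + k i : ℤ) : ℝ) / n))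
        atTop (𝓝 (∫ x : Fin d → ℝ, (φ x) ^ 2))) ∧
    ∃ C : ℝ, ∀ n : ℕ, 1 ≤ n → ∀ j : Fin d → ℤ,
      |(n : ℝ) ^ (-(d : ℝ)) * ∑' k : Fin d → ℤ,
          φ (fun i => (k i : ℝ) / n) * φ (fun i => ((j i + k i : ℤ) : ℝ) / n)| ≤ C :=
  stmt9_general φ hφ
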